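/- arXiv:2311.11042 — 2 statements merged into one kernel-verified Lean document; each statement's English description precedes it below -/
import Mathlib

section
/- Let σ ⊂ ℝ^m be an empty lattice simplex of dimension d. Then there is no y ∈ M*(σ) with rdeg y = d. -/
open Set

noncomputable section

/-- Lift a point of `ℝ^m` to height 1 in `ℝ^(m+1)`. -/
def lift {m : ℕ} (x : Fin m → ℝ) : Fin (m + 1) → ℝ := Fin.snoc x 1

/-- A point with integer coordinates (a lattice point). -/
def isLat {n : ℕ} (x : Fin n → ℝ) : Prop := ∀ i, ∃ z : ℤ, x i = (z : ℝ)

/-- The cone `C(P)` generated by `P × {1}` (for convex `P`). -/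
def coneOf {m : ℕ} (P : Set (Fin m → ℝ)) : Set (Fin (m + 1) → ℝ) :=
  {y | ∃ (c : ℝ) (p : Fin m → ℝ), 0 ≤ c ∧ p ∈ P ∧ y = c • lift p}

/-- The semigroup `M(P)` generated by the lattice points of `P × {1}`. -/
def Msemi {m : ℕ} (P : Set (Fin m → ℝ)) : AddSubmonoid (Fin (m + 1) → ℝ) :=
  AddSubmonoid.closure {y | ∃ p ∈ P, isLat p ∧ y = lift p}

/-- `M*(P)`: the lattice points in the relative interior of `C(P)`. -/
def Mstar {m : ℕ} (P : Set (Fin m → ℝ)) : Set (Fin (m + 1) → ℝ) :=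
  {y | y ∈ intrinsicInterior ℝ (coneOf P) ∧ isLat y}

/-- The degree: the last coordinate. -/
def deg {m : ℕ} (y : Fin (m + 1) → ℝ) : ℝ := y (Fin.last m)

/-- The reduced `P`-degree of `y`. -/
def rdeg {m : ℕ} (P : Set (Fin m → ℝ)) (y : Fin (m + 1) → ℝ) : ℝ :=
  sInf {r | ∃ z w, z ∈ Mstar P ∧ w ∈ Msemi P ∧ y = z + w ∧ r = deg z}

/-- An empty lattice simplex: its only lattice points are its vertices. -/
def IsEmptyLatticeSimplex {m : ℕ} (s : Set (Fin m → ℝ)) : Prop :=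
  ∃ (k : ℕ) (x : Fin (k + 1) → (Fin m → ℝ)), AffineIndependent ℝ x ∧
    (∀ i, isLat (x i)) ∧ s = convexHull ℝ (Set.range x) ∧
    (∀ p ∈ s, isLat p → p ∈ Set.range x)

/-- A lattice triangulation of `P`: a finite face-closed family of empty lattice
simplices covering `P`, with pairwise disjoint relative interiors (every point of `P`
lies in the relative interior of exactly one simplex), and using every lattice point
of `P` as a vertex. -/
structure IsLatticeTriangulation {m : ℕ} (P : Set (Fin m → ℝ))
    (T : Set (Set (Fin m → ℝ))) : Prop where
  finite : T.Finite
  simplex : ∀ s ∈ T, IsEmptyLatticeSimplex s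
  subset : ∀ s ∈ T, s ⊆ P
  partition : ∀ p ∈ P, ∃! s, s ∈ T ∧ p ∈ intrinsicInterior ℝ s
  vertex : ∀ p ∈ P, isLat p → {p} ∈ T

/-!
Write `z ∈ M*(σ)` as `∑ qᵢ • (xᵢ, 1)` with all `qᵢ > 0`, so that `deg z = ∑ qᵢ`. If `z` realises
`rdeg y = d`, no `qₖ` exceeds `1`: otherwise `z - (xₖ, 1) ∈ M*(σ)` would give a decomposition of `y`
of smaller degree. But then `∑ (xᵢ, 1) - z = ∑ (1 - qᵢ) • (xᵢ, 1)` is a lattice point of degree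
`d + 1 - d = 1`, i.e. a lattice point of `σ` whose barycentric coordinates `1 - qᵢ` are all `< 1`,
so it is not a vertex, contradicting emptiness.
-/

theorem intrinsicInterior_eq_interior_of_affineSpan_eq_top {𝕜 V P : Type*} [Ring 𝕜]
    [AddCommGroup V] [Module 𝕜 V] [TopologicalSpace P] [AddTorsor V P] {s : Set P}
    (hs : affineSpan 𝕜 s = ⊤) : intrinsicInterior 𝕜 s = interior s := by
  have hopen : IsOpen (affineSpan 𝕜 s : Set P) := by rw [hs]; exact isOpen_univ
  have he : Topology.IsOpenEmbedding ((↑) : affineSpan 𝕜 s → P) :=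
    hopen.isOpenEmbedding_subtypeVal
  rw [intrinsicInterior, ← he.isOpenMap.preimage_interior_eq_interior_preimage he.continuous,
    image_preimage_eq_inter_range, Subtype.range_coe, hs, AffineSubspace.top_coe, inter_univ]

theorem LinearMap.intrinsicInterior_image_of_injective {𝕜 E F : Type*}
    [NontriviallyNormedField 𝕜] [CompleteSpace 𝕜]
    [NormedAddCommGroup E] [NormedSpace 𝕜 E] [FiniteDimensional 𝕜 E]
    [NormedAddCommGroup F] [NormedSpace 𝕜 F] (T : E →ₗ[𝕜] F) (hT : Function.Injective T)
    (s : Set E) : intrinsicInterior 𝕜 (T '' s) = T '' intrinsicInterior 𝕜 s := by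
  let ψ := LinearEquiv.ofInjective T hT
  have hT' : ⇑T = (LinearMap.range T).subtypeₗᵢ.toAffineIsometry ∘ ψ.toAffineEquiv := rfl
  rw [hT', image_comp, image_comp, AffineIsometry.intrinsicInterior_image,
    AffineEquiv.intrinsicInterior_image]

theorem intrinsicInterior_pi_Ici_zero (ι : Type*) [Fintype ι] :
    intrinsicInterior ℝ (univ.pi fun _ : ι => Ici (0 : ℝ)) = univ.pi fun _ => Ioi 0 := by
  have hint : interior (univ.pi fun _ : ι => Ici (0 : ℝ)) = univ.pi fun _ => Ioi 0 := by
    simp only [interior_pi_set finite_univ, interior_Ici]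
  rw [intrinsicInterior_eq_interior_of_affineSpan_eq_top, hint]
  rw [← (convex_pi fun _ _ => convex_Ici 0).interior_nonempty_iff_affineSpan_eq_top, hint]
  exact ⟨fun _ => 1, by simp⟩

theorem convexHull_range_eq_image_stdSimplex {ι E : Type*} [Fintype ι] [AddCommGroup E]
    [Module ℝ E] (x : ι → E) :
    convexHull ℝ (range x) = Fintype.linearCombination ℝ x '' stdSimplex ℝ ι := by
  classical
  rw [← convexHull_rangle_single_eq_stdSimplex, LinearMap.image_convexHull, ← range_comp]
  congr
  funext i
  simp [Fintype.linearCombination_apply_single]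

section Cone

variable {ι : Type*} [Fintype ι] {m : ℕ} (x : ι → Fin m → ℝ)

def liftCombination : (ι → ℝ) →ₗ[ℝ] (Fin (m + 1) → ℝ) :=
  Fintype.linearCombination ℝ fun i => lift (x i)

theorem liftCombination_apply (q : ι → ℝ) :
    liftCombination x q = ∑ i, q i • lift (x i) :=
  Fintype.linearCombination_apply _ _ _

theorem liftCombination_single [DecidableEq ι] (i : ι) :
    liftCombination x (Pi.single i 1) = lift (x i) := by
  rw [liftCombination, Fintype.linearCombination_apply_single, one_smul]

theorem liftCombination_castSucc (q : ι → ℝ) (j : Fin m) :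
    liftCombination x q (Fin.castSucc j) = ∑ i, q i * x i j := by
  simp [liftCombination_apply, Finset.sum_apply, lift]

theorem deg_liftCombination (q : ι → ℝ) : deg (liftCombination x q) = ∑ i, q i := by
  simp [deg, liftCombination_apply, Finset.sum_apply, lift]

theorem lift_linearCombination {w : ι → ℝ} (hw : ∑ i, w i = 1) :
    lift (Fintype.linearCombination ℝ x w) = liftCombination x w := by
  funext j
  induction j using Fin.lastCases with
  | last => simpa [lift, deg, hw] using (deg_liftCombination x w).symm
  | cast j => simp [liftCombination_castSucc, lift, Fintype.linearCombination_apply,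
      Finset.sum_apply]

variable {x}

theorem injective_liftCombination (hx : AffineIndependent ℝ x) :
    Function.Injective (liftCombination x) := by
  rw [← LinearMap.ker_eq_bot, LinearMap.ker_eq_bot']
  intro q hq
  have hsum : ∑ i, q i = 0 := by rw [← deg_liftCombination, hq]; rfl
  have hcomb : ∑ i, q i • x i = 0 := by
    funext j
    simpa [Finset.sum_apply, ← liftCombination_castSucc] using congrFun hq (Fin.castSucc j)
  funext i
  exact hx.eq_zero_of_sum_eq_zero hsum hcomb i (Finset.mem_univ i)

theorem coneOf_convexHull_range [Nonempty ι] :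
    coneOf (convexHull ℝ (range x)) = liftCombination x '' univ.pi fun _ => Ici 0 := by
  ext z
  constructor
  · rintro ⟨c, p, hc, hp, rfl⟩
    rw [convexHull_range_eq_image_stdSimplex] at hp
    obtain ⟨w, hw, rfl⟩ := hp
    exact ⟨c • w, fun i _ => mul_nonneg hc (hw.1 i), by
      rw [map_smul, lift_linearCombination x hw.2]⟩
  · rintro ⟨q, hq, rfl⟩
    simp only [mem_univ_pi, mem_Ici] at hq
    obtain hzero | hpos := (Finset.sum_nonneg fun i _ => hq i).eq_or_lt
    · have : q = 0 := funext fun i =>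
        (Finset.sum_eq_zero_iff_of_nonneg fun i _ => hq i).mp hzero.symm i (Finset.mem_univ i)
      obtain ⟨i⟩ := ‹Nonempty ι›
      exact ⟨0, x i, le_rfl, subset_convexHull ℝ _ (mem_range_self i), by simp [this]⟩
    · set w := (∑ i, q i)⁻¹ • q
      have hw : w ∈ stdSimplex ℝ ι :=
        ⟨fun i => mul_nonneg (inv_nonneg.mpr hpos.le) (hq i), by
          simp [w, ← Finset.mul_sum, hpos.ne']⟩
      refine ⟨∑ i, q i, Fintype.linearCombination ℝ x w, hpos.le, ?_, ?_⟩
      · rw [convexHull_range_eq_image_stdSimplex]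
        exact mem_image_of_mem _ hw
      · rw [lift_linearCombination x hw.2, ← map_smul, smul_smul, mul_inv_cancel₀ hpos.ne',
          one_smul]

theorem intrinsicInterior_coneOf_convexHull_range [Nonempty ι] (hx : AffineIndependent ℝ x) :
    intrinsicInterior ℝ (coneOf (convexHull ℝ (range x))) =
      liftCombination x '' univ.pi fun _ => Ioi 0 := by
  rw [coneOf_convexHull_range, LinearMap.intrinsicInterior_image_of_injective _
    (injective_liftCombination hx), intrinsicInterior_pi_Ici_zero]

end Cone

def intLattice (n : ℕ) : AddSubgroup (Fin n → ℝ) :=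
  AddSubgroup.pi univ fun _ => (Int.castAddHom ℝ).range

theorem isLat_iff_mem_intLattice {n : ℕ} {p : Fin n → ℝ} : isLat p ↔ p ∈ intLattice n := by
  simp only [isLat, intLattice, AddSubgroup.mem_pi, mem_univ, forall_const,
    AddMonoidHom.mem_range, Int.coe_castAddHom, eq_comm]

theorem isLat_lift_iff {m : ℕ} {p : Fin m → ℝ} : isLat (lift p) ↔ isLat p := by
  refine ⟨fun h j => by simpa [lift] using h (Fin.castSucc j), fun h j => ?_⟩
  induction j using Fin.lastCases with
  | last => exact ⟨1, by simp [lift]⟩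
  | cast j => simpa [lift] using h j

theorem lift_mem_intLattice {m : ℕ} {p : Fin m → ℝ} (hp : isLat p) : lift p ∈ intLattice (m + 1) :=
  isLat_iff_mem_intLattice.1 (isLat_lift_iff.2 hp)

section ReducedDegree

variable {m : ℕ} {P : Set (Fin m → ℝ)}

theorem deg_nonneg_of_mem_Mstar {z : Fin (m + 1) → ℝ} (hz : z ∈ Mstar P) : 0 ≤ deg z := by
  obtain ⟨c, p, hc, -, rfl⟩ := intrinsicInterior_subset hz.1
  simpa [deg, lift] using hc

theorem deg_sub_lift (z : Fin (m + 1) → ℝ) (p : Fin m → ℝ) : deg (z - lift p) = deg z - 1 := by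
  simp [deg, lift]

theorem lift_mem_Msemi {p : Fin m → ℝ} (hp : p ∈ P) (hlat : isLat p) : lift p ∈ Msemi P :=
  AddSubmonoid.subset_closure ⟨p, hp, hlat, rfl⟩

theorem rdeg_le {y z w : Fin (m + 1) → ℝ} (hz : z ∈ Mstar P) (hw : w ∈ Msemi P)
    (hy : y = z + w) : rdeg P y ≤ deg z :=
  csInf_le ⟨0, by rintro _ ⟨z, w, hz, -, -, rfl⟩; exact deg_nonneg_of_mem_Mstar hz⟩
    ⟨z, w, hz, hw, hy, rfl⟩

/-- Degrees of lattice points are integers, so the infimum defining `rdeg` is attained. -/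
theorem exists_deg_eq_rdeg {y : Fin (m + 1) → ℝ} (hy : y ∈ Mstar P) :
    ∃ z w, z ∈ Mstar P ∧ w ∈ Msemi P ∧ y = z + w ∧ deg z = rdeg P y := by
  have hint : ∀ z ∈ Mstar P, ∃ n : ℤ, deg z = n := fun z hz => hz.2 (Fin.last m)
  obtain ⟨n, ⟨z, w, hz, hw, hyzw, hzn⟩, hmin⟩ := Int.exists_least_of_bdd
    (P := fun n : ℤ => ∃ z w, z ∈ Mstar P ∧ w ∈ Msemi P ∧ y = z + w ∧ deg z = n)
    ⟨0, by
      rintro n ⟨z, -, hz, -, -, hzn⟩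
      exact_mod_cast hzn ▸ deg_nonneg_of_mem_Mstar hz⟩
    (let ⟨n, hn⟩ := hint y hy; ⟨n, y, 0, hy, zero_mem _, (add_zero y).symm, hn⟩)
  refine ⟨z, w, hz, hw, hyzw, le_antisymm ?_ (rdeg_le hz hw hyzw)⟩
  refine le_csInf ⟨_, z, w, hz, hw, hyzw, rfl⟩ ?_
  rintro _ ⟨z', w', hz', hw', hy', rfl⟩
  obtain ⟨n', hn'⟩ := hint z' hz'
  rw [hzn, hn']
  exact_mod_cast hmin n' ⟨z', w', hz', hw', hy', hn'⟩

end ReducedDegree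

section EmptySimplex

variable {ι : Type*} [Fintype ι] {m : ℕ} {x : ι → Fin m → ℝ}

theorem mem_Mstar_convexHull_range_iff [Nonempty ι] (hx : AffineIndependent ℝ x)
    {z : Fin (m + 1) → ℝ} :
    z ∈ Mstar (convexHull ℝ (range x)) ↔
      (∃ q, (∀ i, 0 < q i) ∧ liftCombination x q = z) ∧ isLat z := by
  simp [Mstar, intrinsicInterior_coneOf_convexHull_range hx]

theorem exists_one_lt_of_isLat_liftCombination (hx : AffineIndependent ℝ x)
    (hxlat : ∀ i, isLat (x i))
    (hempty : ∀ p ∈ convexHull ℝ (range x), isLat p → p ∈ range x)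
    {q : ι → ℝ} (hq : ∀ i, 0 < q i) (hlat : isLat (liftCombination x q))
    (hsum : ∑ i, q i + 1 = Fintype.card ι) : ∃ k, 1 < q k := by
  classical
  by_contra! hle
  set w : ι → ℝ := 1 - q
  have hw : w ∈ stdSimplex ℝ ι :=
    ⟨fun i => sub_nonneg.2 (hle i), by simp [w, Finset.sum_sub_distrib]; linarith⟩
  have hlift : lift (Fintype.linearCombination ℝ x w) =
      ∑ i, lift (x i) - liftCombination x q := by
    rw [lift_linearCombination x hw.2]
    simp only [w, map_sub, liftCombination_apply, Pi.one_apply, one_smul]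
  have hplat : isLat (Fintype.linearCombination ℝ x w) := by
    rw [← isLat_lift_iff, hlift, isLat_iff_mem_intLattice]
    exact sub_mem (sum_mem fun i _ => lift_mem_intLattice (hxlat i))
      (isLat_iff_mem_intLattice.1 hlat)
  have hmem : Fintype.linearCombination ℝ x w ∈ convexHull ℝ (range x) := by
    rw [convexHull_range_eq_image_stdSimplex]
    exact mem_image_of_mem _ hw
  obtain ⟨j, hj⟩ := hempty _ hmem hplat
  have hwj : w = Pi.single j 1 := injective_liftCombination hx <| by
    rw [← lift_linearCombination x hw.2, ← hj, liftCombination_single]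
  have := congrFun hwj j
  simp only [w, Pi.sub_apply, Pi.one_apply, Pi.single_eq_same] at this
  linarith [hq j]

theorem exists_sub_lift_mem_Mstar [Nonempty ι] (hx : AffineIndependent ℝ x)
    (hxlat : ∀ i, isLat (x i))
    (hempty : ∀ p ∈ convexHull ℝ (range x), isLat p → p ∈ range x)
    {z : Fin (m + 1) → ℝ} (hz : z ∈ Mstar (convexHull ℝ (range x)))
    (hdeg : deg z + 1 = Fintype.card ι) :
    ∃ k, z - lift (x k) ∈ Mstar (convexHull ℝ (range x)) := by
  classical
  obtain ⟨⟨q, hq, rfl⟩, hzlat⟩ := (mem_Mstar_convexHull_range_iff hx).1 hz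
  obtain ⟨k, hk⟩ := exists_one_lt_of_isLat_liftCombination hx hxlat hempty hq hzlat
    (by rwa [deg_liftCombination] at hdeg)
  refine ⟨k, (mem_Mstar_convexHull_range_iff hx).2 ⟨⟨q - Pi.single k 1, fun i => ?_, ?_⟩, ?_⟩⟩
  · rcases eq_or_ne i k with rfl | hik
    · simpa using hk
    · simpa [hik] using hq i
  · rw [map_sub, liftCombination_single]
  · exact isLat_iff_mem_intLattice.2
      (sub_mem (isLat_iff_mem_intLattice.1 hzlat) (lift_mem_intLattice (hxlat k)))

end EmptySimplex

/-- for an empty lattice `d`-simplex, no `y ∈ M*(σ)` has `rdeg y = d`. -/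
theorem stmt3 {m d : ℕ} (σ : Set (Fin m → ℝ)) (x : Fin (d + 1) → (Fin m → ℝ))
    (hx : AffineIndependent ℝ x) (hxlat : ∀ i, isLat (x i))
    (hσ : σ = convexHull ℝ (Set.range x))
    (hempty : ∀ p ∈ σ, isLat p → p ∈ Set.range x) :
    ∀ y ∈ Mstar σ, rdeg σ y ≠ d := by
  subst hσ
  rintro y hy hrdeg
  obtain ⟨z, w, hz, hw, rfl, hzdeg⟩ := exists_deg_eq_rdeg hy
  obtain ⟨k, hk⟩ := exists_sub_lift_mem_Mstar hx hxlat hempty hz (by simp [hzdeg, hrdeg])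
  have hle := rdeg_le hk (add_mem hw (lift_mem_Msemi (subset_convexHull ℝ _ (mem_range_self k))
    (hxlat k))) (show z + w = z - lift (x k) + (w + lift (x k)) by abel)
  rw [deg_sub_lift] at hle
  linarith
end
end

section
/- Let 𝒫 ⊂ ℝ^m be a lattice polytope of dimension d that is not an empty simplex. Then rdeg y ≤ d for all y ∈ M*(𝒫). -/
/-!
Let `G` be the set of lattice points of `P`, so `P = conv G`, and `C(P)` is the cone of
nonnegative combinations of the lifts `(g, 1)`. Since `P` is not an empty simplex, `G` is
affinely dependent. If `y ∈ M*(P)` has `deg y ≥ d + 1`, a Carathéodory representation of `y`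
(over an affinely independent subset, so with at most `d + 1` terms of total weight `deg y`)
has a coefficient `> 1`, except when it is `∑_{t ∈ T} (t, 1)` over an affine basis `T`; then
an affine relation between `T` and a point `r ∈ G \ T` trades it for a representation with a
coefficient `> 1`. A coefficient `c > 1` at `q` gives `y - c (q, 1) ∈ C(P)`, and
`y - (q, 1)` lies on the open segment from `y ∈ relint C(P)` to that point, so it is again in
`M*(P)`. Induction on the degree finishes the proof.
-/

open Set

noncomputable section

open Finset Module Topology

theorem mem_intrinsicInterior_iff_exists_nhds {𝕜 V : Type*} [Ring 𝕜] [AddCommGroup V]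
    [Module 𝕜 V] [TopologicalSpace V] {s : Set V} {y : V} :
    y ∈ intrinsicInterior 𝕜 s ↔ y ∈ affineSpan 𝕜 s ∧ ∃ U ∈ 𝓝 y, U ∩ affineSpan 𝕜 s ⊆ s := by
  constructor
  · rintro ⟨x, hx, rfl⟩
    rw [mem_interior_iff_mem_nhds, nhds_induced, Filter.mem_comap] at hx
    obtain ⟨U, hU, hUs⟩ := hx
    exact ⟨x.2, U, hU, fun u ⟨huU, huA⟩ => hUs (show (⟨u, huA⟩ : affineSpan 𝕜 s) ∈ _ from huU)⟩
  · rintro ⟨hyA, U, hU, hUs⟩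
    refine ⟨⟨y, hyA⟩, ?_, rfl⟩
    rw [mem_interior_iff_mem_nhds, nhds_induced, Filter.mem_comap]
    exact ⟨U, hU, fun x hx => hUs ⟨hx, x.2⟩⟩

theorem Convex.combo_intrinsicInterior_self_mem_intrinsicInterior {𝕜 V : Type*} [Field 𝕜]
    [LinearOrder 𝕜] [IsStrictOrderedRing 𝕜] [AddCommGroup V] [Module 𝕜 V] [TopologicalSpace V]
    [IsTopologicalAddGroup V] [ContinuousConstSMul 𝕜 V] {s : Set V} (hs : Convex 𝕜 s) {x y : V}
    (hx : x ∈ intrinsicInterior 𝕜 s) (hy : y ∈ s) {a b : 𝕜} (ha : 0 < a) (hb : 0 ≤ b)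
    (hab : a + b = 1) :
    a • x + b • y ∈ intrinsicInterior 𝕜 s := by
  obtain ⟨hxA, U, hU, hUs⟩ := mem_intrinsicInterior_iff_exists_nhds.1 hx
  have hyA : y ∈ affineSpan 𝕜 s := subset_affineSpan 𝕜 s hy
  have hb' : b = 1 - a := by linarith
  subst hb'
  let g : V → V := fun w => AffineMap.lineMap y w a⁻¹
  have hg : ∀ u, g (a • u + (1 - a) • y) = u := fun u => by
    simp only [g, AffineMap.lineMap_apply_module]
    match_scalars
    · field_simp; ring
    · field_simp
  have hgc : Continuous g := by
    simp only [g, AffineMap.lineMap_apply_module]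
    fun_prop
  have hcombo : a • x + (1 - a) • y = AffineMap.lineMap y x a := by
    rw [AffineMap.lineMap_apply_module]; module
  refine mem_intrinsicInterior_iff_exists_nhds.2 ⟨?_, g ⁻¹' U, ?_, ?_⟩
  · rw [hcombo]; exact AffineMap.lineMap_mem a hyA hxA
  · exact hgc.continuousAt.preimage_mem_nhds (by rw [hg]; exact hU)
  · rintro w ⟨hwU, hwA⟩
    have hgw : g w ∈ s := hUs ⟨hwU, AffineMap.lineMap_mem a⁻¹ hyA hwA⟩
    have hw : w = a • g w + (1 - a) • y := by
      simp only [g, AffineMap.lineMap_apply_module]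
      match_scalars
      · field_simp
      · field_simp; ring
    rw [hw]
    exact hs hgw hy ha.le (by linarith) (by ring)

lemma exists_sum_smul_eq_of_mem_affineSpan {k E : Type*} [Ring k] [AddCommGroup E] [Module k E]
    {T : Finset E} {r : E} (h : r ∈ affineSpan k (T : Set E)) :
    ∃ α : E → k, ∑ t ∈ T, α t = 1 ∧ r = ∑ t ∈ T, α t • t := by
  classical
  rw [← Set.image_id (T : Set E)] at h
  obtain ⟨fs, w, hfs, hw1, rfl⟩ := eq_affineCombination_of_mem_affineSpan_image h
  have hfsT : fs ⊆ T := by exact_mod_cast hfs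
  refine ⟨fun t => if t ∈ fs then w t else 0, ?_, ?_⟩
  · rw [Finset.sum_ite_mem, Finset.inter_eq_right.2 hfsT, hw1]
  · simp only [ite_smul, zero_smul, Finset.sum_ite_mem, Finset.inter_eq_right.2 hfsT]
    exact Finset.affineCombination_eq_linear_combination _ _ _ hw1

lemma sum_smul_eq_of_nonneg_of_one_le {k ι E : Type*} [Field k] [LinearOrder k]
    [IsStrictOrderedRing k] [AddCommGroup E] [Module k E] {T : Finset ι} {α : ι → k}
    {p : ι → E} (hα : ∀ i ∈ T, 0 ≤ α i) (hα1 : ∑ i ∈ T, α i = 1) {i₀ : ι} (hi₀ : i₀ ∈ T)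
    (h1 : 1 ≤ α i₀) : ∑ i ∈ T, α i • p i = p i₀ := by
  classical
  have hα₀ : α i₀ = 1 := le_antisymm (hα1 ▸ Finset.single_le_sum hα hi₀) h1
  have hrest : ∀ i ∈ T.erase i₀, α i = 0 := by
    refine (Finset.sum_eq_zero_iff_of_nonneg fun i hi => hα i (Finset.mem_of_mem_erase hi)).1 ?_
    rw [Finset.sum_erase_eq_sub hi₀, hα1, hα₀, sub_self]
  rw [Finset.sum_eq_single_of_mem i₀ hi₀ fun i hi hne => by
    rw [hrest i (Finset.mem_erase.2 ⟨hne, hi⟩), zero_smul], hα₀, one_smul]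

lemma exists_mem_sdiff_eq_sum_smul {k E : Type*} [DivisionRing k] [AddCommGroup E]
    [Module k E] {S T : Finset E} (hTS : T ⊆ S) (hT : AffineIndependent k ((↑) : T → E))
    (hcard : #T = finrank k (vectorSpan k (S : Set E)) + 1)
    (hS : ¬ AffineIndependent k ((↑) : S → E)) :
    ∃ r ∈ S, r ∉ T ∧ ∃ α : E → k, ∑ t ∈ T, α t = 1 ∧ r = ∑ t ∈ T, α t • t := by
  obtain ⟨r, hrS, hrT⟩ : ∃ r ∈ S, r ∉ T := by
    by_contra! h
    exact hS (hT.mono (s := (S : Set E)) h)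
  have : FiniteDimensional k (affineSpan k (S : Set E)).direction := by
    rw [direction_affineSpan]
    exact finiteDimensional_vectorSpan_of_finite k S.finite_toSet
  have hspan := hT.affineSpan_eq_of_le_of_card_eq_finrank_add_one (sp := affineSpan k (S : Set E))
    (by simpa using affineSpan_mono k (Finset.coe_subset.2 hTS))
    (by rw [direction_affineSpan, Fintype.card_coe]; exact hcard)
  rw [Subtype.range_coe] at hspan
  exact ⟨r, hrS, hrT, exists_sum_smul_eq_of_mem_affineSpan (hspan ▸ subset_affineSpan k _ hrS)⟩

lemma exists_affineIndependent_fin_range_eq {k E : Type*} [DivisionRing k] [AddCommGroup E]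
    [Module k E] {G : Finset E} (hne : G.Nonempty) (hind : AffineIndependent k ((↑) : G → E))
    {n : ℕ} (hn : finrank k (vectorSpan k (G : Set E)) = n) :
    ∃ x : Fin (n + 1) → E, AffineIndependent k x ∧ Set.range x = G := by
  have : Nonempty G := hne.to_subtype
  have hrange : Set.range ((↑) : G → E) = G := Subtype.range_coe
  have hcard := hind.finrank_vectorSpan_add_one
  rw [hrange, hn] at hcard
  let e := Fintype.equivFinOfCardEq hcard.symm
  refine ⟨fun i => e.symm i, hind.comp_embedding e.symm.toEmbedding, ?_⟩
  rw [← hrange]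
  exact e.symm.surjective.range_comp _

section Lift

variable {m : ℕ}

@[simp] lemma lift_castSucc (x : Fin m → ℝ) (i : Fin m) : lift x i.castSucc = x i := by
  simp [lift]

@[simp] lemma lift_last (x : Fin m → ℝ) : lift x (Fin.last m) = 1 := by
  simp [lift]

lemma deg_lift (x : Fin m → ℝ) : deg (lift x) = 1 := lift_last x

lemma deg_sub (y z : Fin (m + 1) → ℝ) : deg (y - z) = deg y - deg z := rfl

lemma smul_lift (c : ℝ) (x : Fin m → ℝ) : c • lift x = Fin.snoc (c • x) c := by
  ext i
  refine Fin.lastCases ?_ (fun j => ?_) i <;> simp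

lemma sum_smul_lift {ι : Type*} (s : Finset ι) (w : ι → ℝ) (z : ι → Fin m → ℝ) :
    ∑ i ∈ s, w i • lift (z i) = Fin.snoc (∑ i ∈ s, w i • z i) (∑ i ∈ s, w i) := by
  ext j
  refine Fin.lastCases ?_ (fun j => ?_) j <;> simp [Finset.sum_apply]

lemma isLat_lift {x : Fin m → ℝ} (h : isLat x) : isLat (lift x) := by
  intro i
  refine Fin.lastCases ⟨1, by simp⟩ (fun j => ?_) i
  simpa using h j

lemma isLat.sub {n : ℕ} {x y : Fin n → ℝ} (hx : isLat x) (hy : isLat y) : isLat (x - y) := by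
  intro i
  obtain ⟨a, ha⟩ := hx i
  obtain ⟨b, hb⟩ := hy i
  exact ⟨a - b, by simp [ha, hb]⟩

theorem Bornology.IsBounded.finite_sep_isLat {n : ℕ} {s : Set (Fin n → ℝ)}
    (hs : Bornology.IsBounded s) : {p ∈ s | isLat p}.Finite := by
  obtain ⟨R, hR⟩ := hs.subset_closedBall 0
  refine (Set.Finite.pi (t := fun _ => ((↑) : ℤ → ℝ) '' Set.Icc (-⌈R⌉) ⌈R⌉)
    fun _ => (Set.finite_Icc _ _).image _).subset ?_
  rintro p ⟨hp, hlat⟩ i -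
  obtain ⟨z, hz⟩ := hlat i
  have hpi : |(z : ℝ)| ≤ R := by
    rw [← hz, ← Real.norm_eq_abs]
    exact (norm_le_pi_norm p i).trans (mem_closedBall_zero_iff.1 (hR hp))
  have hR' := Int.le_ceil R
  refine ⟨z, ⟨?_, ?_⟩, hz.symm⟩
  · have : -(⌈R⌉ : ℝ) ≤ z := by linarith [neg_abs_le (z : ℝ)]
    exact_mod_cast this
  · have : (z : ℝ) ≤ ⌈R⌉ := by linarith [le_abs_self (z : ℝ)]
    exact_mod_cast this

end Lift

section LiftCone

variable {m : ℕ}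

def liftCone (S : Finset (Fin m → ℝ)) : Set (Fin (m + 1) → ℝ) :=
  {y | ∃ ν : (Fin m → ℝ) → ℝ, (∀ s ∈ S, 0 ≤ ν s) ∧ y = ∑ s ∈ S, ν s • lift s}

variable {S T : Finset (Fin m → ℝ)}

lemma sum_smul_lift_mem_liftCone (hTS : T ⊆ S) {ν : (Fin m → ℝ) → ℝ} (hν : ∀ t ∈ T, 0 ≤ ν t) :
    ∑ t ∈ T, ν t • lift t ∈ liftCone S := by
  classical
  refine ⟨fun s => if s ∈ T then ν s else 0, fun s _ => ?_, ?_⟩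
  · dsimp only
    split_ifs with hs
    exacts [hν s hs, le_rfl]
  · rw [← Finset.sum_subset hTS fun s _ hs => by simp [hs]]
    exact Finset.sum_congr rfl fun t ht => by simp [ht]

lemma sum_smul_lift_sub_mem_liftCone (hTS : T ⊆ S) {ν : (Fin m → ℝ) → ℝ}
    (hν : ∀ t ∈ T, 0 ≤ ν t) {q : Fin m → ℝ} (hq : q ∈ T) :
    ∑ t ∈ T, ν t • lift t - ν q • lift q ∈ liftCone S := by
  classical
  rw [← Finset.sum_erase_eq_sub hq]
  exact sum_smul_lift_mem_liftCone ((erase_subset q T).trans hTS)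
    fun t ht => hν t (mem_of_mem_erase ht)

lemma convex_liftCone (S : Finset (Fin m → ℝ)) : Convex ℝ (liftCone S) := by
  rintro _ ⟨ν, hν, rfl⟩ _ ⟨κ, hκ, rfl⟩ a b ha hb -
  refine ⟨fun s => a * ν s + b * κ s, fun s hs =>
    add_nonneg (mul_nonneg ha (hν s hs)) (mul_nonneg hb (hκ s hs)), ?_⟩
  simp only [Finset.smul_sum, smul_smul, ← Finset.sum_add_distrib, add_smul]

theorem exists_affineIndependent_of_mem_coneOf_convexHull {y : Fin (m + 1) → ℝ}
    (hy : y ∈ coneOf (convexHull ℝ (S : Set (Fin m → ℝ)))) :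
    ∃ T ⊆ S, AffineIndependent ℝ ((↑) : T → Fin m → ℝ) ∧
      ∃ ν : (Fin m → ℝ) → ℝ, (∀ t ∈ T, 0 ≤ ν t) ∧ y = ∑ t ∈ T, ν t • lift t := by
  obtain ⟨c, x, hc, hx, rfl⟩ := hy
  rw [convexHull_eq_union] at hx
  simp only [Set.mem_iUnion] at hx
  obtain ⟨T, hTS, hT, hxT⟩ := hx
  obtain ⟨w, hw0, hw1, rfl⟩ := Finset.mem_convexHull'.1 hxT
  refine ⟨T, Finset.coe_subset.1 hTS, hT, fun t => c * w t,
    fun t ht => mul_nonneg hc (hw0 t ht), ?_⟩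
  rw [sum_smul_lift, smul_lift, ← Finset.mul_sum, hw1, mul_one, Finset.smul_sum]
  simp only [smul_smul]

lemma coneOf_convexHull (hS : S.Nonempty) : coneOf (convexHull ℝ ↑S) = liftCone S := by
  ext y
  constructor
  · intro hy
    obtain ⟨T, hTS, -, ν, hν, rfl⟩ := exists_affineIndependent_of_mem_coneOf_convexHull hy
    exact sum_smul_lift_mem_liftCone hTS hν
  · rintro ⟨ν, hν, rfl⟩
    set c := ∑ s ∈ S, ν s
    rcases (Finset.sum_nonneg hν).eq_or_lt with hc | hc
    · obtain ⟨p, hp⟩ := hS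
      refine ⟨0, p, le_rfl, subset_convexHull ℝ _ hp, ?_⟩
      rw [zero_smul]
      exact Finset.sum_eq_zero fun s hs => by
        rw [(Finset.sum_eq_zero_iff_of_nonneg hν).1 hc.symm s hs, zero_smul]
    · refine ⟨c, c⁻¹ • ∑ s ∈ S, ν s • s, hc.le, ?_, ?_⟩
      · refine Finset.mem_convexHull'.2 ⟨fun s => c⁻¹ * ν s, fun s hs => by
          have := hν s hs; positivity, by rw [← Finset.mul_sum, inv_mul_cancel₀ hc.ne'], ?_⟩
        simp only [Finset.smul_sum, smul_smul]
      · rw [sum_smul_lift, smul_lift, smul_inv_smul₀ hc.ne']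

end LiftCone

section Step

variable {m : ℕ} {S T : Finset (Fin m → ℝ)}

theorem exists_sub_smul_lift_mem_liftCone_of_affineIndependent (hTS : T ⊆ S)
    (hT : AffineIndependent ℝ ((↑) : T → Fin m → ℝ))
    (hcard : #T = finrank ℝ (vectorSpan ℝ (S : Set (Fin m → ℝ))) + 1)
    (hS : ¬ AffineIndependent ℝ ((↑) : S → Fin m → ℝ)) :
    ∃ q ∈ S, ∃ c : ℝ, 1 < c ∧ ∑ t ∈ T, lift t - c • lift q ∈ liftCone S := by
  classical
  obtain ⟨r, hrS, hrT, α, hα1, hαr⟩ := exists_mem_sdiff_eq_sum_smul hTS hT hcard hS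
  have hliftr : lift r = ∑ t ∈ T, α t • lift t := by
    rw [sum_smul_lift, hα1, ← hαr]; rfl
  have hTne : T.Nonempty := Finset.nonempty_of_sum_ne_zero (by rw [hα1]; exact one_ne_zero)
  obtain ⟨t₀, ht₀, hmax⟩ := T.exists_max_image α hTne
  have hα₀ : 0 < α t₀ := by
    by_contra! h
    linarith [Finset.sum_nonpos fun t ht => (hmax t ht).trans h]
  -- `s = 1 / max α` is the largest multiple of the relation `lift r = ∑ α t • lift t` that can
  -- be traded into `∑ lift t` with all coefficients staying nonnegative
  set s := (α t₀)⁻¹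
  set κ : (Fin m → ℝ) → ℝ := fun x => if x = r then s else 1 - s * α x
  have hκT : ∀ t ∈ T, κ t = 1 - s * α t := fun t ht => if_neg (ne_of_mem_of_not_mem ht hrT)
  have hκ : ∀ x ∈ insert r T, 0 ≤ κ x := by
    intro x hx
    rcases Finset.mem_insert.1 hx with rfl | hx
    · simp [κ, s, hα₀.le]
    · rw [hκT x hx, sub_nonneg]
      calc s * α x ≤ s * α t₀ := mul_le_mul_of_nonneg_left (hmax x hx) (by positivity)
        _ = 1 := inv_mul_cancel₀ hα₀.ne'
  have hsum : ∑ t ∈ T, lift t = ∑ x ∈ insert r T, κ x • lift x := by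
    have hκr : κ r = s := if_pos rfl
    rw [Finset.sum_insert hrT, hκr,
      Finset.sum_congr rfl fun t ht => congrArg (· • lift t) (hκT t ht)]
    simp only [sub_smul, one_smul, Finset.sum_sub_distrib, mul_smul, ← Finset.smul_sum, ← hliftr]
    abel
  have hrTS : insert r T ⊆ S := Finset.insert_subset hrS hTS
  suffices ∃ q ∈ insert r T, 1 < κ q from
    let ⟨q, hq, hq1⟩ := this
    ⟨q, hrTS hq, κ q, hq1, hsum ▸ sum_smul_lift_sub_mem_liftCone hrTS hκ hq⟩
  by_cases hneg : ∃ q ∈ T, α q < 0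
  · obtain ⟨q, hq, hαq⟩ := hneg
    refine ⟨q, Finset.mem_insert_of_mem hq, ?_⟩
    rw [hκT q hq]
    nlinarith [inv_pos.2 hα₀]
  · push Not at hneg
    refine ⟨r, Finset.mem_insert_self r T, ?_⟩
    simp only [κ, if_pos, s]
    rw [one_lt_inv₀ hα₀]
    by_contra! h1
    have hr : r = t₀ := hαr.trans (sum_smul_eq_of_nonneg_of_one_le (p := id) hneg hα1 ht₀ h1)
    exact hrT (hr ▸ ht₀)

theorem exists_sub_smul_lift_mem_liftCone (hS : ¬ AffineIndependent ℝ ((↑) : S → Fin m → ℝ))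
    {y : Fin (m + 1) → ℝ} (hy : y ∈ coneOf (convexHull ℝ (S : Set (Fin m → ℝ))))
    (hdeg : (finrank ℝ (vectorSpan ℝ (S : Set (Fin m → ℝ))) : ℝ) + 1 ≤ deg y) :
    ∃ q ∈ S, ∃ c : ℝ, 1 < c ∧ y - c • lift q ∈ liftCone S := by
  obtain ⟨T, hTS, hT, ν, hν, rfl⟩ := exists_affineIndependent_of_mem_coneOf_convexHull hy
  set n := finrank ℝ (vectorSpan ℝ (S : Set (Fin m → ℝ)))
  have hcard : #T ≤ n + 1 := by
    have h := hT.card_le_finrank_succ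
    rw [Fintype.card_coe] at h
    refine h.trans (Nat.add_le_add_right (Submodule.finrank_mono (vectorSpan_mono ℝ ?_)) 1)
    rintro _ ⟨t, rfl⟩
    exact hTS t.2
  have hdeg' : (n : ℝ) + 1 ≤ ∑ t ∈ T, ν t := by
    simpa [deg, sum_smul_lift] using hdeg
  by_cases hbig : ∃ q ∈ T, 1 < ν q
  · obtain ⟨q, hq, hq1⟩ := hbig
    exact ⟨q, hTS hq, ν q, hq1, sum_smul_lift_sub_mem_liftCone hTS hν hq⟩
  · push Not at hbig
    -- `∑ ν ≤ #T ≤ n + 1 ≤ ∑ ν` forces `#T = n + 1` and `ν = 1` on `T`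
    have hsum_le : ∑ t ∈ T, ν t ≤ #T := by simpa using Finset.sum_le_sum hbig
    have hT1 : #T = n + 1 := le_antisymm hcard (by exact_mod_cast hdeg'.trans hsum_le)
    have hν1 : ∀ t ∈ T, ν t = 1 :=
      (Finset.sum_eq_sum_iff_of_le hbig).1 (le_antisymm (by simpa using hsum_le)
        (by simpa [hT1] using hdeg'))
    rw [Finset.sum_congr rfl fun t ht => by rw [hν1 t ht, one_smul]]
    exact exists_sub_smul_lift_mem_liftCone_of_affineIndependent hTS hT hT1 hS

end Step

section Reduction

variable {m : ℕ} {S : Finset (Fin m → ℝ)}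

lemma exists_deg_eq_natCast_of_mem_Mstar {P : Set (Fin m → ℝ)} {y : Fin (m + 1) → ℝ}
    (hy : y ∈ Mstar P) : ∃ k : ℕ, deg y = k := by
  obtain ⟨z, hz⟩ := hy.2 (Fin.last m)
  obtain ⟨c, p, hc, -, rfl⟩ := intrinsicInterior_subset hy.1
  have hcz : c = z := by simpa using hz
  have hz0 : 0 ≤ z := by exact_mod_cast hcz ▸ hc
  refine ⟨z.toNat, ?_⟩
  rw [show deg (c • lift p) = c by simp [deg], hcz]
  exact_mod_cast (Int.toNat_of_nonneg hz0).symm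

theorem exists_sub_lift_mem_Mstar_s6 (hSlat : ∀ s ∈ S, isLat s)
    (hS : ¬ AffineIndependent ℝ ((↑) : S → Fin m → ℝ))
    {y : Fin (m + 1) → ℝ} (hy : y ∈ Mstar (convexHull ℝ (S : Set (Fin m → ℝ))))
    (hdeg : (finrank ℝ (vectorSpan ℝ (S : Set (Fin m → ℝ))) : ℝ) + 1 ≤ deg y) :
    ∃ q ∈ S, y - lift q ∈ Mstar (convexHull ℝ (S : Set (Fin m → ℝ))) := by
  obtain ⟨q, hq, c, hc, hyc⟩ :=
    exists_sub_smul_lift_mem_liftCone hS (intrinsicInterior_subset hy.1) hdeg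
  refine ⟨q, hq, ?_, hy.2.sub (isLat_lift (hSlat q hq))⟩
  have hc0 : 0 < c := zero_lt_one.trans hc
  have hcomb : y - lift q = (1 - c⁻¹) • y + c⁻¹ • (y - c • lift q) := by
    rw [smul_sub, smul_smul, inv_mul_cancel₀ hc0.ne']
    module
  have hyS := hy.1
  rw [coneOf_convexHull ⟨q, hq⟩] at hyS ⊢
  rw [hcomb]
  exact (convex_liftCone S).combo_intrinsicInterior_self_mem_intrinsicInterior hyS hyc
    (sub_pos.2 (inv_lt_one_of_one_lt₀ hc)) (inv_nonneg.2 hc0.le) (by ring)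

theorem exists_mem_Mstar_add_mem_Msemi (hSlat : ∀ s ∈ S, isLat s)
    (hS : ¬ AffineIndependent ℝ ((↑) : S → Fin m → ℝ))
    {y : Fin (m + 1) → ℝ} (hy : y ∈ Mstar (convexHull ℝ (S : Set (Fin m → ℝ)))) :
    ∃ z w, z ∈ Mstar (convexHull ℝ (S : Set (Fin m → ℝ))) ∧
      w ∈ Msemi (convexHull ℝ (S : Set (Fin m → ℝ))) ∧ y = z + w ∧
      deg z ≤ finrank ℝ (vectorSpan ℝ (S : Set (Fin m → ℝ))) := by
  set n := finrank ℝ (vectorSpan ℝ (S : Set (Fin m → ℝ)))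
  obtain ⟨k, hk⟩ := exists_deg_eq_natCast_of_mem_Mstar hy
  induction k generalizing y with
  | zero => exact ⟨y, 0, hy, zero_mem _, (add_zero y).symm, by simp [hk]⟩
  | succ k ih =>
    by_cases hle : deg y ≤ n
    · exact ⟨y, 0, hy, zero_mem _, (add_zero y).symm, hle⟩
    have hdeg : (n : ℝ) + 1 ≤ deg y := by
      rw [hk] at hle ⊢
      exact_mod_cast Nat.succ_le_of_lt (by exact_mod_cast not_le.1 hle)
    obtain ⟨q, hq, hyq⟩ := exists_sub_lift_mem_Mstar_s6 hSlat hS hy hdeg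
    have hdegq : deg (y - lift q) = k := by
      rw [deg_sub, deg_lift, hk]
      push_cast
      ring
    obtain ⟨z, w, hz, hw, hzw, hdz⟩ := ih hyq hdegq
    refine ⟨z, w + lift q, hz, add_mem hw (AddSubmonoid.subset_closure
      ⟨q, subset_convexHull ℝ _ hq, hSlat q hq, rfl⟩), ?_, hdz⟩
    rw [← add_assoc, ← hzw, sub_add_cancel]

end Reduction

/-- a lattice polytope of dimension `d` that is not an empty simplex
satisfies `rdeg y ≤ d` for all `y ∈ M*(P)`. -/
theorem stmt6 {m d : ℕ} (P : Set (Fin m → ℝ)) (V : Set (Fin m → ℝ))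
    (hV : V.Finite) (hVlat : ∀ p ∈ V, isLat p) (hP : P = convexHull ℝ V)
    (hdim : Module.finrank ℝ (vectorSpan ℝ P) = d)
    (hnes : ¬ ∃ x : Fin (d + 1) → (Fin m → ℝ), AffineIndependent ℝ x ∧
      P = convexHull ℝ (Set.range x) ∧ ∀ p ∈ P, isLat p → p ∈ Set.range x) :
    ∀ y ∈ Mstar P, ∃ z w, z ∈ Mstar P ∧ w ∈ Msemi P ∧ y = z + w ∧ deg z ≤ d := by
  intro y hy
  have hfin : {p ∈ P | isLat p}.Finite :=
    (hP ▸ (hV.isCompact_convexHull ℝ).isBounded).finite_sep_isLat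
  set G := hfin.toFinset
  have hG : (G : Set (Fin m → ℝ)) = {p ∈ P | isLat p} := hfin.coe_toFinset
  have hVG : V ⊆ G := fun v hv => hG ▸ ⟨hP ▸ subset_convexHull ℝ V hv, hVlat v hv⟩
  have hPG : P = convexHull ℝ G := (hP ▸ convexHull_mono hVG).antisymm
    (convexHull_min (hG ▸ Set.sep_subset _ _) (hP ▸ convex_convexHull ℝ V))
  have hdimG : finrank ℝ (vectorSpan ℝ (G : Set (Fin m → ℝ))) = d := by
    rw [← hdim, hPG, ← direction_affineSpan ℝ (convexHull ℝ _), affineSpan_convexHull,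
      direction_affineSpan]
  have hGne : G.Nonempty := by
    obtain ⟨c, p, -, hp, -⟩ := intrinsicInterior_subset hy.1
    exact Finset.coe_nonempty.1 (convexHull_nonempty_iff.1 ⟨p, hPG ▸ hp⟩)
  have hGdep : ¬ AffineIndependent ℝ ((↑) : G → Fin m → ℝ) := fun hind => by
    obtain ⟨x, hx, hxG⟩ := exists_affineIndependent_fin_range_eq hGne hind hdimG
    exact hnes ⟨x, hx, by rw [hxG, hPG], fun p hp hlat => by rw [hxG, hG]; exact ⟨hp, hlat⟩⟩
  rw [hPG] at hy ⊢
  rw [← hdimG]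
  exact exists_mem_Mstar_add_mem_Msemi (fun g hg => (hfin.mem_toFinset.1 hg).2) hGdep hy
end
end
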